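/- (Chooser Lemma) Consider the connected domination game on a connected graph G with an extra player, Chooser, who may insert zero or more extra moves after any move of Dominator or Staller, subject only to the played set remaining connected. If Chooser plays k vertices in total and Dominator and Staller both play optimally, then the total number of played vertices is at least γ_cg(G) − k and at most γ_cg(G) + k. -/

import Mathlib

open Finset

namespace ConnDomGame

variable {V : Type*} [Fintype V] [DecidableEq V]

/-- The closed neighborhood of a finite set of vertices. -/
def nbhd (G : SimpleGraph V) [DecidableRel G.Adj] (D : Finset V) : Finset V :=
  univ.filter fun u => u ∈ D ∨ ∃ v ∈ D, G.Adj u v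

/-- The legal moves in the connected domination game on `G` with predominated set `S`,
from the position where the set of played vertices is `D`: a legal move must dominate
a not-yet-dominated vertex and (except for the first move) be adjacent to a played vertex. -/
def legalMoves (G : SimpleGraph V) [DecidableRel G.Adj] (S D : Finset V) : Finset V :=
  univ.filter fun v =>
    ¬ (nbhd G {v} ⊆ S ∪ nbhd G D) ∧ (D = ∅ ∨ ∃ u ∈ D, G.Adj v u)

/-- Optimal number of further moves in the connected domination game on `G` with
predominated set `S`, from the position with played set `D`; `turn = true` means
Dominator (the minimizer) is to move.  The value is `⊤` if the player to move can
force the game to get stuck with an undominated vertex remaining.  The fuel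
argument `n` is sufficient whenever `n + D.card ≥ Fintype.card V`. -/
noncomputable def val (G : SimpleGraph V) [DecidableRel G.Adj] (S : Finset V) :
    Bool → ℕ → Finset V → ℕ∞
  | _, 0, D => if univ ⊆ S ∪ nbhd G D then 0 else ⊤
  | turn, n + 1, D =>
    if h : (legalMoves G S D).Nonempty then
      if turn then
        1 + (legalMoves G S D).inf' h fun v => val G S false n (insert v D)
      else
        1 + (legalMoves G S D).sup' h fun v => val G S true n (insert v D)
    else if univ ⊆ S ∪ nbhd G D then 0 else ⊤

/-- The Dominator-start game connected domination number of `G` with the vertices of `S`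
predominated (`γ_cg(G|S)`; for `S = ∅` this is `γ_cg(G)`). -/
noncomputable def gammaCG (G : SimpleGraph V) [DecidableRel G.Adj] (S : Finset V) : ℕ∞ :=
  val G S true (Fintype.card V) ∅

/-- The Staller-start game connected domination number of `G` with `S` predominated. -/
noncomputable def gammaCG' (G : SimpleGraph V) [DecidableRel G.Adj] (S : Finset V) : ℕ∞ :=
  val G S false (Fintype.card V) ∅

/-- The connected domination number of `G` with the set `S` predominated:
minimum size of a set `D` inducing a connected subgraph and dominating all
vertices outside `S`. -/
noncomputable def gammaC (G : SimpleGraph V) (S : Finset V) : ℕ :=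
  sInf {k | ∃ D : Finset V, D.card = k ∧ (G.induce (D : Set V)).Connected ∧
    ∀ u, u ∈ S ∨ u ∈ D ∨ ∃ v ∈ D, G.Adj u v}

/-- `l` is a legal sequence of first moves of the connected domination game on `G`
with predominated set `S`. -/
def LegalSeq (G : SimpleGraph V) [DecidableRel G.Adj] (S : Finset V) (l : List V) : Prop :=
  ∀ i (h : i < l.length), l.get ⟨i, h⟩ ∈ legalMoves G S (l.take i).toFinset

end ConnDomGame

namespace ConnDomGame

/-- Optimal value of the connected domination game with Chooser on `G` with
predominated set `S`.  `turn = true` means Dominator is to move, `k` is the number of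
vertices Chooser may still play, and `D` is the set of played vertices.  At any point
Chooser may insert a move: any unplayed vertex adjacent to a played one (Chooser's
moves are counted in the total).  In `valCh G S true` Chooser colludes with Staller
(maximizes the total number of played vertices), in `valCh G S false` he colludes with
Dominator (minimizes); bounds holding in both cases hold for an arbitrary Chooser. -/
noncomputable def valCh {V : Type*} [Fintype V] [DecidableEq V] (G : SimpleGraph V)
    [DecidableRel G.Adj] (S : Finset V) (favorMax : Bool) :
    Bool → ℕ → ℕ → Finset V → ℕ∞
  | _, 0, _, D => if Finset.univ ⊆ S ∪ nbhd G D then 0 else ⊤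
  | turn, n + 1, k, D =>
    let base : ℕ∞ :=
      if h : (legalMoves G S D).Nonempty then
        if turn then
          1 + (legalMoves G S D).inf' h fun v => valCh G S favorMax false n k (insert v D)
        else
          1 + (legalMoves G S D).sup' h fun v => valCh G S favorMax true n k (insert v D)
      else if Finset.univ ⊆ S ∪ nbhd G D then 0 else ⊤
    match k with
    | 0 => base
    | k' + 1 =>
      if hc : ((Finset.univ \ D).filter fun c => ∃ u ∈ D, G.Adj c u).Nonempty then
        if favorMax then
          max base (1 + ((Finset.univ \ D).filter fun c => ∃ u ∈ D, G.Adj c u).sup' hc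
            fun c => valCh G S favorMax turn n k' (insert c D))
        else
          min base (1 + ((Finset.univ \ D).filter fun c => ∃ u ∈ D, G.Adj c u).inf' hc
            fun c => valCh G S favorMax turn n k' (insert c D))
      else base

set_option linter.unusedSectionVars false
set_option maxHeartbeats 1000000

section Aux

variable {V : Type*} [Fintype V] [DecidableEq V] (G : SimpleGraph V) [DecidableRel G.Adj]
  (S : Finset V)

lemma val_zero (t : Bool) (D : Finset V) :
    val G S t 0 D = if univ ⊆ S ∪ nbhd G D then 0 else ⊤ := rfl

lemma val_succ_em {D : Finset V} (h : ¬ (legalMoves G S D).Nonempty) (t : Bool) (n : ℕ) :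
    val G S t (n+1) D = if univ ⊆ S ∪ nbhd G D then 0 else ⊤ := by
  cases t <;> simp [val, h]

lemma val_true_succ {D : Finset V} (h : (legalMoves G S D).Nonempty) (n : ℕ) :
    val G S true (n+1) D
      = 1 + (legalMoves G S D).inf' h fun v => val G S false n (insert v D) := by
  simp [val, h]

lemma val_false_succ {D : Finset V} (h : (legalMoves G S D).Nonempty) (n : ℕ) :
    val G S false (n+1) D
      = 1 + (legalMoves G S D).sup' h fun v => val G S true n (insert v D) := by
  simp [val, h]

lemma valCh_zero (fav t : Bool) (k : ℕ) (D : Finset V) :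
    valCh G S fav t 0 k D = if univ ⊆ S ∪ nbhd G D then 0 else ⊤ := rfl

noncomputable def chBase (fav t : Bool) (n k : ℕ) (D : Finset V) : ℕ∞ :=
  if h : (legalMoves G S D).Nonempty then
    if t then
      1 + (legalMoves G S D).inf' h fun v => valCh G S fav false n k (insert v D)
    else
      1 + (legalMoves G S D).sup' h fun v => valCh G S fav true n k (insert v D)
  else if Finset.univ ⊆ S ∪ nbhd G D then 0 else ⊤

lemma valCh_succ_zero (fav t : Bool) (n : ℕ) (D : Finset V) :
    valCh G S fav t (n+1) 0 D = chBase G S fav t n 0 D := rfl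

lemma valCh_succ_succ (fav t : Bool) (n k : ℕ) (D : Finset V) :
    valCh G S fav t (n+1) (k+1) D =
      if hc : ((Finset.univ \ D).filter fun c => ∃ u ∈ D, G.Adj c u).Nonempty then
        if fav then
          max (chBase G S fav t n (k+1) D)
            (1 + ((Finset.univ \ D).filter fun c => ∃ u ∈ D, G.Adj c u).sup' hc
              fun c => valCh G S fav t n k (insert c D))
        else
          min (chBase G S fav t n (k+1) D)
            (1 + ((Finset.univ \ D).filter fun c => ∃ u ∈ D, G.Adj c u).inf' hc
              fun c => valCh G S fav t n k (insert c D))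
      else chBase G S fav t n (k+1) D := rfl
lemma mem_nbhd {D : Finset V} {u : V} :
    u ∈ nbhd G D ↔ u ∈ D ∨ ∃ v ∈ D, G.Adj u v := by
  simp [nbhd]

lemma subset_nbhd {D : Finset V} : D ⊆ nbhd G D := fun u hu => by
  rw [mem_nbhd]; exact Or.inl hu

lemma nbhd_mono {D E : Finset V} (h : D ⊆ E) : nbhd G D ⊆ nbhd G E := by
  intro u hu
  rw [mem_nbhd] at hu ⊢
  rcases hu with h1 | ⟨v, hv, ha⟩
  · exact Or.inl (h h1)
  · exact Or.inr ⟨v, h hv, ha⟩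

lemma nbhd_empty : nbhd G (∅ : Finset V) = ∅ := by
  ext u; simp [mem_nbhd]

lemma mem_nbhd_singleton {v u : V} : u ∈ nbhd G {v} ↔ u = v ∨ G.Adj u v := by
  simp [mem_nbhd]

lemma self_mem_nbhd_singleton (v : V) : v ∈ nbhd G {v} :=
  (mem_nbhd_singleton G).2 (Or.inl rfl)

lemma nbhd_insert (v : V) (D : Finset V) :
    nbhd G (insert v D) = nbhd G {v} ∪ nbhd G D := by
  ext u
  simp only [mem_union, mem_nbhd, mem_insert, mem_singleton]
  aesop

lemma mem_legal {D : Finset V} {v : V} :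
    v ∈ legalMoves G ∅ D ↔
      ¬ nbhd G {v} ⊆ nbhd G D ∧ (D = ∅ ∨ ∃ u ∈ D, G.Adj v u) := by
  simp [legalMoves]

lemma legal_not_mem {D : Finset V} {v : V} (h : v ∈ legalMoves G ∅ D) : v ∉ D := by
  intro hv
  exact ((mem_legal G).1 h).1 (nbhd_mono G (by simpa using hv))

lemma not_dom_of_legal {D : Finset V} {v : V} (h : v ∈ legalMoves G ∅ D) :
    ¬ (univ : Finset V) ⊆ ∅ ∪ nbhd G D := by
  intro hdom
  obtain ⟨u, hu1, hu2⟩ := not_subset.1 ((mem_legal G).1 h).1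
  exact hu2 (by simpa using hdom (mem_univ u))

lemma dom_of_univ {D : Finset V} (h : (univ : Finset V) ⊆ D) :
    (univ : Finset V) ⊆ ∅ ∪ nbhd G D := by
  intro u hu
  simpa using subset_nbhd G (h hu)

/-- No-stuck lemma: in a connected graph, if some vertex is undominated then
there is a legal move. -/
lemma exists_legal (hG : G.Connected) {D : Finset V}
    (h : ¬ (univ : Finset V) ⊆ ∅ ∪ nbhd G D) : (legalMoves G ∅ D).Nonempty := by
  obtain ⟨u, -, hu⟩ := not_subset.1 h
  rw [mem_union] at hu
  push_neg at hu
  replace hu : u ∉ nbhd G D := hu.2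
  rcases D.eq_empty_or_nonempty with rfl | ⟨d, hd⟩
  · refine ⟨u, (mem_legal G).2 ⟨?_, Or.inl rfl⟩⟩
    rw [nbhd_empty]
    exact fun hsub => (notMem_empty u) (hsub (self_mem_nbhd_singleton G u))
  · have hwalk := (hG.preconnected d u).some
    -- induct along a walk from d (dominated) to u (undominated)
    have key : ∀ (a b : V) (w : G.Walk a b), a ∈ nbhd G D → b ∉ nbhd G D →
        (legalMoves G ∅ D).Nonempty := by
      intro a b w
      induction w with
      | nil => exact fun ha hb => absurd ha hb
      | @cons x y z hadj p ih =>
        intro hx hz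
        by_cases hy : y ∈ nbhd G D
        · exact ih hy hz
        · rw [mem_nbhd] at hx
          rcases hx with hxD | ⟨d', hd', ha'⟩
          · refine ⟨y, (mem_legal G).2 ⟨?_, Or.inr ⟨x, hxD, hadj.symm⟩⟩⟩
            intro hsub
            exact hy (hsub (self_mem_nbhd_singleton G y))
          · refine ⟨x, (mem_legal G).2 ⟨?_, Or.inr ⟨d', hd', ha'⟩⟩⟩
            intro hsub
            exact hy (hsub ((mem_nbhd_singleton G).2 (Or.inr hadj.symm)))
    exact key d u hwalk (subset_nbhd G hd) hu

/-- The played set in the game is built up connectedly. -/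
inductive BuiltConn (G : SimpleGraph V) [DecidableRel G.Adj] : Finset V → Prop
  | empty : BuiltConn G ∅
  | insert {D : Finset V} {v : V} (hD : BuiltConn G D)
      (h : D = ∅ ∨ ∃ u ∈ D, G.Adj v u) : BuiltConn G (insert v D)

/-- Crossing lemma: a built-connected set containing a vertex satisfying `P` and one
not satisfying `P` contains an edge crossing `P`. -/
lemma BuiltConn.crossing {R : Finset V} (hR : BuiltConn G R) (P : V → Prop)
    {a x : V} (ha : a ∈ R) (hPa : ¬ P a) (hx : x ∈ R) (hPx : P x) :
    ∃ b ∈ R, ∃ c ∈ R, G.Adj b c ∧ P b ∧ ¬ P c := by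
  revert a x
  induction hR with
  | empty => intro a x ha _ _ _; exact absurd ha (notMem_empty a)
  | @insert D v hD hadj ih =>
    intro a x ha hPa hx hPx
    by_cases hvD : v ∈ D
    · rw [insert_eq_self.2 hvD] at ha hx
      obtain ⟨b, hb, c, hc, h⟩ := ih ha hPa hx hPx
      exact ⟨b, mem_insert_of_mem hb, c, mem_insert_of_mem hc, h⟩
    rcases mem_insert.1 ha with rfl | haD <;> rcases mem_insert.1 hx with rfl | hxD
    · exact absurd hPx hPa
    · rcases hadj with rfl | ⟨u, hu, huv⟩
      · exact absurd hxD (notMem_empty x)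
      by_cases hPu : P u
      · exact ⟨u, mem_insert_of_mem hu, a, mem_insert_self a D, huv.symm, hPu, hPa⟩
      · obtain ⟨b, hb, c, hc, h⟩ := ih hu hPu hxD hPx
        exact ⟨b, mem_insert_of_mem hb, c, mem_insert_of_mem hc, h⟩
    · rcases hadj with rfl | ⟨u, hu, huv⟩
      · exact absurd haD (notMem_empty a)
      by_cases hPu : P u
      · obtain ⟨b, hb, c, hc, h⟩ := ih haD hPa hu hPu
        exact ⟨b, mem_insert_of_mem hb, c, mem_insert_of_mem hc, h⟩
      · exact ⟨x, mem_insert_self x D, u, mem_insert_of_mem hu, huv, hPx, hPu⟩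
    · obtain ⟨b, hb, c, hc, h⟩ := ih haD hPa hxD hPx
      exact ⟨b, mem_insert_of_mem hb, c, mem_insert_of_mem hc, h⟩
/-- Recording lemma: any legal move in the real game can be answered by a legal
move in the imagined game which is either already really played or the move itself. -/
lemma recording {I R : Finset V} {v : V} (hR : BuiltConn G R)
    (hN : nbhd G I ⊆ nbhd G R) (hIR : I.Nonempty → (I ∩ R).Nonempty)
    (hv : v ∈ legalMoves G ∅ R) :
    ∃ w ∈ legalMoves G ∅ I, w ∈ R ∨ w = v := by
  rcases I.eq_empty_or_nonempty with rfl | hI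
  · refine ⟨v, (mem_legal G).2 ⟨?_, Or.inl rfl⟩, Or.inr rfl⟩
    rw [nbhd_empty]
    exact fun hsub => notMem_empty v (hsub (self_mem_nbhd_singleton G v))
  · obtain ⟨x0, hx0⟩ := hIR hI
    rw [mem_inter] at hx0
    have hvdom : ¬ nbhd G {v} ⊆ nbhd G I :=
      fun hsub => ((mem_legal G).1 hv).1 (hsub.trans hN)
    by_cases hvNI : v ∈ nbhd G I
    · rcases (mem_nbhd G).1 hvNI with hvI | ⟨y, hy, hvy⟩
      · exact absurd (nbhd_mono G (singleton_subset_iff.2 hvI)) hvdom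
      · exact ⟨v, (mem_legal G).2 ⟨hvdom, Or.inr ⟨y, hy, hvy⟩⟩, Or.inr rfl⟩
    · have hRne : R ≠ ∅ := fun h => notMem_empty x0 (h ▸ hx0.2)
      rcases ((mem_legal G).1 hv).2 with h0 | ⟨r, hr, hvr⟩
      · exact absurd h0 hRne
      by_cases hrNI : r ∈ nbhd G I
      · have hrI : r ∉ I := fun h => hvNI ((mem_nbhd G).2 (Or.inr ⟨r, h, hvr⟩))
        rcases (mem_nbhd G).1 hrNI with h' | hadj
        · exact absurd h' hrI
        · refine ⟨r, (mem_legal G).2 ⟨?_, Or.inr hadj⟩, Or.inl hr⟩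
          intro hsub
          exact hvNI (hsub ((mem_nbhd_singleton G).2 (Or.inr hvr)))
      · obtain ⟨b, hbR, c, hcR, hbc, hPb, hPc⟩ :=
          hR.crossing G (· ∈ nbhd G I) hr hrNI hx0.2 (subset_nbhd G hx0.1)
        have hbI : b ∉ I := fun h => hPc ((mem_nbhd G).2 (Or.inr ⟨b, h, hbc.symm⟩))
        rcases (mem_nbhd G).1 hPb with h' | hadj
        · exact absurd h' hbI
        · refine ⟨b, (mem_legal G).2 ⟨?_, Or.inr hadj⟩, Or.inl hbR⟩
          intro hsub
          exact hPc (hsub ((mem_nbhd_singleton G).2 (Or.inr hbc.symm)))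

/-- Imagination lemma: if the imagined position `I` is dominated by the real
position `R`, every imagined vertex is really played or fully really dominated,
and the positions share a vertex, then (with sufficient fuel) the optimal value of
the real game is at most that of the imagined game. -/
lemma img (hG : G.Connected) :
    ∀ (n : ℕ) (t : Bool) (I R : Finset V) (m : ℕ),
      BuiltConn G R →
      nbhd G I ⊆ nbhd G R →
      (∀ x ∈ I, x ∈ R ∨ nbhd G {x} ⊆ nbhd G R) →
      ((I ∩ R).Nonempty ∨ (I = ∅ ∧ R = ∅)) →
      Fintype.card V ≤ n + R.card →
      Fintype.card V ≤ m + I.card →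
      val G ∅ t n R ≤ val G ∅ t m I := by
  intro n
  induction n with
  | zero =>
    intro t I R m _ _ _ _ hnR _
    have hRuniv : R = univ :=
      Finset.eq_univ_of_card R (le_antisymm (Finset.card_le_univ R) (by omega))
    rw [val_zero, if_pos (dom_of_univ G (hRuniv ▸ Finset.Subset.refl _))]
    exact zero_le
  | succ n ih =>
    intro t I R m hbc hNIR hIP h3 hnR hmI
    by_cases hLR : (legalMoves G ∅ R).Nonempty
    · have hRundom : ¬ (univ : Finset V) ⊆ ∅ ∪ nbhd G R :=
        not_dom_of_legal G hLR.choose_spec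
      have hIundom : ¬ (univ : Finset V) ⊆ ∅ ∪ nbhd G I := by
        intro h
        refine hRundom fun u hu => ?_
        have := h hu
        rw [mem_union] at this ⊢
        exact this.imp id (fun h' => hNIR h')
      have hLI : (legalMoves G ∅ I).Nonempty := exists_legal G hG hIundom
      have hIne : I ≠ univ := by
        rintro rfl
        exact hIundom (dom_of_univ G (Finset.Subset.refl _))
      have hm1 : 1 ≤ m := by
        have hlt : I.card < Fintype.card V :=
          lt_of_le_of_ne (Finset.card_le_univ I) (fun h => hIne (Finset.eq_univ_of_card I h))
        omega
      obtain ⟨m', rfl⟩ : ∃ m', m = m' + 1 := ⟨m - 1, by omega⟩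
      have hIRne : I.Nonempty → (I ∩ R).Nonempty := by
        intro hI
        rcases h3 with h3 | ⟨hI0, _⟩
        · exact h3
        · exact absurd hI0 (Finset.nonempty_iff_ne_empty.1 hI)
      cases t with
      | true =>
        rw [val_true_succ G ∅ hLR, val_true_succ G ∅ hLI]
        refine add_le_add_right ?_ 1
        obtain ⟨w, hw, hEq⟩ :=
          Finset.exists_mem_eq_inf' hLI (fun v => val G ∅ false m' (insert v I))
        rw [hEq]
        have hwI : w ∉ I := legal_not_mem G hw
        by_cases hcov : nbhd G {w} ⊆ nbhd G R
        · obtain ⟨z, hz⟩ := hLR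
          refine le_trans (Finset.inf'_le _ hz) ?_
          have h3' : ((insert w I) ∩ (insert z R)).Nonempty := by
            rcases h3 with h3 | ⟨hI0, hR0⟩
            · obtain ⟨x0, hx0⟩ := h3
              rw [mem_inter] at hx0
              exact ⟨x0, mem_inter.2 ⟨mem_insert_of_mem hx0.1, mem_insert_of_mem hx0.2⟩⟩
            · exfalso
              rw [hR0, nbhd_empty] at hcov
              exact notMem_empty w (hcov (self_mem_nbhd_singleton G w))
          refine ih false (insert w I) (insert z R) m'
            (hbc.insert ((mem_legal G).1 hz).2) ?_ ?_ (Or.inl h3') ?_ ?_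
          · rw [nbhd_insert, nbhd_insert]
            exact union_subset (hcov.trans subset_union_right)
              (hNIR.trans subset_union_right)
          · intro x hx
            rcases mem_insert.1 hx with rfl | hxI
            · exact Or.inr (hcov.trans (nbhd_mono G (subset_insert _ _)))
            · rcases hIP x hxI with h | h
              · exact Or.inl (mem_insert_of_mem h)
              · exact Or.inr (h.trans (nbhd_mono G (subset_insert _ _)))
          · rw [Finset.card_insert_of_notMem (legal_not_mem G hz)]; omega
          · rw [Finset.card_insert_of_notMem hwI]; omega
        · have hwLR : w ∈ legalMoves G ∅ R := by
            rw [mem_legal]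
            refine ⟨hcov, ?_⟩
            rcases ((mem_legal G).1 hw).2 with hI0 | ⟨y, hy, hwy⟩
            · rcases h3 with h3 | ⟨_, hR0⟩
              · obtain ⟨x, hx⟩ := h3
                rw [hI0] at hx
                simp at hx
              · exact Or.inl hR0
            · rcases hIP y hy with hyR | hyN
              · exact Or.inr ⟨y, hyR, hwy⟩
              · have hwN : w ∈ nbhd G R := hyN ((mem_nbhd_singleton G).2 (Or.inr hwy))
                rcases (mem_nbhd G).1 hwN with hwR | ⟨r, hr, hwr⟩
                · exact absurd (nbhd_mono G (singleton_subset_iff.2 hwR)) hcov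
                · exact Or.inr ⟨r, hr, hwr⟩
          refine le_trans (Finset.inf'_le _ hwLR) ?_
          refine ih false (insert w I) (insert w R) m'
            (hbc.insert ((mem_legal G).1 hwLR).2) ?_ ?_
            (Or.inl ⟨w, mem_inter.2 ⟨mem_insert_self _ _, mem_insert_self _ _⟩⟩) ?_ ?_
          · rw [nbhd_insert, nbhd_insert]
            exact union_subset_union (Finset.Subset.refl _) hNIR
          · intro x hx
            rcases mem_insert.1 hx with rfl | hxI
            · exact Or.inl (mem_insert_self _ _)
            · rcases hIP x hxI with h | h
              · exact Or.inl (mem_insert_of_mem h)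
              · exact Or.inr (h.trans (nbhd_mono G (subset_insert _ _)))
          · rw [Finset.card_insert_of_notMem (legal_not_mem G hwLR)]; omega
          · rw [Finset.card_insert_of_notMem hwI]; omega
      | false =>
        rw [val_false_succ G ∅ hLR, val_false_succ G ∅ hLI]
        refine add_le_add_right ?_ 1
        refine Finset.sup'_le _ _ fun v hv => ?_
        obtain ⟨w, hw, hwRv⟩ := recording G hbc hNIR hIRne hv
        refine le_trans ?_ (Finset.le_sup' (fun w => val G ∅ true m' (insert w I)) hw)
        have hwR' : w ∈ insert v R := by
          rcases hwRv with h | rfl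
          · exact mem_insert_of_mem h
          · exact mem_insert_self _ _
        refine ih true (insert w I) (insert v R) m'
          (hbc.insert ((mem_legal G).1 hv).2) ?_ ?_
          (Or.inl ⟨w, mem_inter.2 ⟨mem_insert_self _ _, hwR'⟩⟩) ?_ ?_
        · rw [nbhd_insert, nbhd_insert]
          refine union_subset ?_ (hNIR.trans subset_union_right)
          rcases hwRv with h | rfl
          · exact (nbhd_mono G (singleton_subset_iff.2 h)).trans subset_union_right
          · exact subset_union_left
        · intro x hx
          rcases mem_insert.1 hx with rfl | hxI
          · exact Or.inl hwR'
          · rcases hIP x hxI with h | h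
            · exact Or.inl (mem_insert_of_mem h)
            · exact Or.inr (h.trans (nbhd_mono G (subset_insert _ _)))
        · rw [Finset.card_insert_of_notMem (legal_not_mem G hv)]; omega
        · rw [Finset.card_insert_of_notMem (legal_not_mem G hw)]; omega
    · have hdom : (univ : Finset V) ⊆ ∅ ∪ nbhd G R := by
        by_contra h
        exact hLR (exists_legal G hG h)
      rw [val_succ_em G ∅ hLR, if_pos hdom]
      exact zero_le
lemma legal_eq_empty_of_dom {D : Finset V} (h : (univ : Finset V) ⊆ ∅ ∪ nbhd G D) :
    legalMoves G ∅ D = ∅ := by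
  have h' : ∀ u, u ∈ nbhd G D := fun u => by simpa using h (mem_univ u)
  ext v
  simp only [notMem_empty, iff_false]
  intro hv
  exact ((mem_legal G).1 hv).1 fun u _ => h' u

lemma val_dom {D : Finset V} (h : (univ : Finset V) ⊆ ∅ ∪ nbhd G D) (t : Bool) (m : ℕ) :
    val G ∅ t m D = 0 := by
  cases m with
  | zero => rw [val_zero, if_pos h]
  | succ m =>
    rw [val_succ_em G ∅ (by rw [legal_eq_empty_of_dom G h]; exact Finset.not_nonempty_empty),
      if_pos h]

/-- Continuation lemma (B): an extra played vertex adjacent to the position does not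
make the game longer. -/
lemma contB (hG : G.Connected) {R : Finset V} {x : V} (t : Bool) (hbc : BuiltConn G R)
    (hx : x ∉ R) (hadj : ∃ u ∈ R, G.Adj x u) {n m : ℕ}
    (hn : Fintype.card V ≤ n + R.card + 1) (hm : Fintype.card V ≤ m + R.card) :
    val G ∅ t n (insert x R) ≤ val G ∅ t m R := by
  obtain ⟨u, hu, -⟩ := id hadj
  refine img G hG n t R (insert x R) m (hbc.insert (Or.inr hadj))
    (nbhd_mono G (subset_insert _ _)) (fun y hy => Or.inl (mem_insert_of_mem hy))
    (Or.inl ⟨u, mem_inter.2 ⟨hu, mem_insert_of_mem hu⟩⟩) ?_ hm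
  rw [Finset.card_insert_of_notMem hx]
  omega

/-- Cross-turn lemma (C'): letting Staller move first costs at most one move. -/
lemma crossFT (hG : G.Connected) {P : Finset V} (hbc : BuiltConn G P) (hP : P.Nonempty)
    {n : ℕ} (hn : Fintype.card V ≤ n + P.card) :
    val G ∅ false n P ≤ 1 + val G ∅ true n P := by
  cases n with
  | zero => rw [val_zero, val_zero]; exact le_add_left (le_refl _)
  | succ n =>
    by_cases hL : (legalMoves G ∅ P).Nonempty
    · rw [val_false_succ G ∅ hL]
      refine add_le_add_right (Finset.sup'_le _ _ fun v hv => ?_) 1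
      have hadj : ∃ u ∈ P, G.Adj v u := by
        rcases ((mem_legal G).1 hv).2 with h0 | h
        · exact absurd h0 (Finset.nonempty_iff_ne_empty.1 hP)
        · exact h
      exact contB G hG true hbc (legal_not_mem G hv) hadj (by omega) (by omega)
    · rw [val_succ_em G ∅ hL, val_succ_em G ∅ hL]
      exact le_add_left (le_refl _)

/-- Cross-turn lemma (C): letting Dominator move first costs at most one move. -/
lemma crossTF (hG : G.Connected) {P : Finset V} (hbc : BuiltConn G P) (hP : P.Nonempty)
    {n : ℕ} (hn : Fintype.card V ≤ n + P.card) :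
    val G ∅ true n P ≤ 1 + val G ∅ false n P := by
  cases n with
  | zero => rw [val_zero, val_zero]; exact le_add_left (le_refl _)
  | succ n =>
    by_cases hL : (legalMoves G ∅ P).Nonempty
    · rw [val_true_succ G ∅ hL, val_false_succ G ∅ hL]
      obtain ⟨v, hv, hEq⟩ :=
        Finset.exists_mem_eq_sup' hL (fun v => val G ∅ true n (insert v P))
      rw [hEq]
      refine le_trans (add_le_add_right (Finset.inf'_le _ hv) 1) ?_
      refine add_le_add_right ?_ 1
      have hadj : ∃ u ∈ P, G.Adj v u := by
        rcases ((mem_legal G).1 hv).2 with h0 | h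
        · exact absurd h0 (Finset.nonempty_iff_ne_empty.1 hP)
        · exact h
      exact crossFT G hG (hbc.insert (Or.inr hadj)) ⟨v, mem_insert_self _ _⟩
        (by rw [Finset.card_insert_of_notMem (legal_not_mem G hv)]; omega)
    · rw [val_succ_em G ∅ hL, val_succ_em G ∅ hL]
      exact le_add_left (le_refl _)
/-- Key insertion lemma (A2): inserting an adjacent vertex into the position (with one
less fuel) decreases the optimal value by at most two. -/
lemma insTwo (hG : G.Connected) :
    ∀ (n : ℕ) (t : Bool) (R : Finset V) (c : V), BuiltConn G R → c ∉ R →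
      (∃ u ∈ R, G.Adj c u) → Fintype.card V ≤ n + 1 + R.card →
      val G ∅ t (n + 1) R ≤ 1 + (1 + val G ∅ t n (insert c R)) := by
  intro n
  induction n with
  | zero =>
    intro t R c hbc hcR hadj hfuel
    by_cases hLR : (legalMoves G ∅ R).Nonempty
    · have hall : ∀ v ∈ legalMoves G ∅ R, ∀ t' : Bool, val G ∅ t' 0 (insert v R) = 0 := by
        intro v hv t'
        have huniv : insert v R = univ :=
          Finset.eq_univ_of_card _ (le_antisymm (Finset.card_le_univ _)
            (by rw [Finset.card_insert_of_notMem (legal_not_mem G hv)]; omega))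
        rw [val_zero, if_pos (dom_of_univ G (huniv ▸ Finset.Subset.refl _))]
      cases t with
      | true =>
        rw [val_true_succ G ∅ hLR]
        obtain ⟨z, hz⟩ := hLR
        refine le_trans (add_le_add_right (Finset.inf'_le _ hz) 1) ?_
        rw [hall z hz false, add_zero]
        exact le_add_right (le_refl 1)
      | false =>
        rw [val_false_succ G ∅ hLR]
        have hsup : (legalMoves G ∅ R).sup' hLR (fun v => val G ∅ true 0 (insert v R)) ≤ 0 :=
          Finset.sup'_le _ _ fun v hv => le_of_eq (hall v hv true)
        refine le_trans (add_le_add_right hsup 1) ?_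
        rw [add_zero]
        exact le_add_right (le_refl 1)
    · have hdom : (univ : Finset V) ⊆ ∅ ∪ nbhd G R := by
        by_contra h
        exact hLR (exists_legal G hG h)
      rw [val_succ_em G ∅ hLR, if_pos hdom]
      exact zero_le
  | succ n ih =>
    intro t R c hbc hcR hadj hfuel
    have hbcRc : BuiltConn G (insert c R) := hbc.insert (Or.inr hadj)
    have hRcne : (insert c R).Nonempty := ⟨c, mem_insert_self _ _⟩
    have hcardRc : (insert c R).card = R.card + 1 := Finset.card_insert_of_notMem hcR
    by_cases hLR : (legalMoves G ∅ R).Nonempty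
    · have hRundom : ¬ (univ : Finset V) ⊆ ∅ ∪ nbhd G R :=
        not_dom_of_legal G hLR.choose_spec
      by_cases hLRc : (legalMoves G ∅ (insert c R)).Nonempty
      · cases t with
        | true =>
          rw [val_true_succ G ∅ hLR]
          obtain ⟨w, hwL, hEq⟩ := Finset.exists_mem_eq_inf' hLRc
            (fun w => val G ∅ false n (insert w (insert c R)))
          have hwdom : ¬ nbhd G {w} ⊆ nbhd G (insert c R) := ((mem_legal G).1 hwL).1
          have hwnotin : w ∉ insert c R := legal_not_mem G hwL
          have hwc : w ≠ c := fun h => hwnotin (h ▸ mem_insert_self _ _)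
          have hwR : w ∉ R := fun h => hwnotin (mem_insert_of_mem h)
          by_cases hwadjR : ∃ u ∈ R, G.Adj w u
          · have hwLR : w ∈ legalMoves G ∅ R := by
              refine (mem_legal G).2 ⟨?_, Or.inr hwadjR⟩
              intro hsub
              exact hwdom (hsub.trans (nbhd_mono G (subset_insert _ _)))
            refine le_trans (add_le_add_right (Finset.inf'_le _ hwLR) 1) ?_
            have step := ih false (insert w R) c (hbc.insert (Or.inr hwadjR))
              (by simp only [mem_insert, not_or]; exact ⟨fun h => hwc h.symm, hcR⟩)
              ⟨hadj.choose, mem_insert_of_mem hadj.choose_spec.1, hadj.choose_spec.2⟩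
              (by rw [Finset.card_insert_of_notMem hwR]; omega)
            refine le_trans (add_le_add_right step 1) ?_
            rw [val_true_succ G ∅ hLRc, hEq, Finset.insert_comm]
          · have hwadjc : G.Adj w c := by
              rcases ((mem_legal G).1 hwL).2 with h0 | ⟨u, hu, hwu⟩
              · exact absurd h0 (Finset.nonempty_iff_ne_empty.1 hRcne)
              · rcases mem_insert.1 hu with rfl | huR
                · exact hwu
                · exact absurd ⟨u, huR, hwu⟩ hwadjR
            have hcER : ¬ nbhd G {c} ⊆ nbhd G R := by
              intro hsub
              have : w ∈ nbhd G R := hsub ((mem_nbhd_singleton G).2 (Or.inr hwadjc))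
              rcases (mem_nbhd G).1 this with h | ⟨r, hr, hwr⟩
              · exact hwR h
              · exact hwadjR ⟨r, hr, hwr⟩
            have hcLR : c ∈ legalMoves G ∅ R := (mem_legal G).2 ⟨hcER, Or.inr hadj⟩
            refine le_trans (add_le_add_right (Finset.inf'_le _ hcLR) 1) ?_
            refine add_le_add_right ?_ 1
            exact crossFT G hG hbcRc hRcne (by omega)
        | false =>
          rw [val_false_succ G ∅ hLR]
          refine add_le_add_right (Finset.sup'_le _ _ fun v hv => ?_) 1
          have hvR : v ∉ R := legal_not_mem G hv
          have hvadjR : ∃ u ∈ R, G.Adj v u := by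
            rcases ((mem_legal G).1 hv).2 with h0 | h
            · exfalso; rw [h0] at hadj; exact absurd hadj.choose_spec.1 (notMem_empty _)
            · exact h
          by_cases hvc : v = c
          · subst hvc
            exact crossTF G hG hbcRc hRcne (by omega)
          · by_cases hvdomc : nbhd G {v} ⊆ nbhd G (insert c R)
            · by_cases hcdomv : nbhd G {c} ⊆ nbhd G (insert v R)
              · -- (ii) swap: both useless relative to the other
                have hcLR : c ∈ legalMoves G ∅ R := by
                  refine (mem_legal G).2 ⟨?_, Or.inr hadj⟩
                  intro hsub
                  apply ((mem_legal G).1 hv).1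
                  refine hvdomc.trans ?_
                  rw [nbhd_insert]
                  exact union_subset hsub (Finset.Subset.refl _)
                refine le_trans (contB G hG true hbc hvR hvadjR (n := n+1) (m := n+2)
                  (by omega) (by omega)) ?_
                rw [val_true_succ G ∅ hLR]
                exact add_le_add_right (Finset.inf'_le _ hcLR) 1
              · -- (i): Dominator plays c from `insert v R`
                have hcLvR : c ∈ legalMoves G ∅ (insert v R) := by
                  refine (mem_legal G).2 ⟨hcdomv, Or.inr
                    ⟨hadj.choose, mem_insert_of_mem hadj.choose_spec.1, hadj.choose_spec.2⟩⟩
                have hne : (legalMoves G ∅ (insert v R)).Nonempty := ⟨c, hcLvR⟩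
                rw [val_true_succ G ∅ hne]
                refine add_le_add_right ?_ 1
                refine le_trans (Finset.inf'_le _ hcLvR) ?_
                rw [Finset.insert_comm]
                refine contB G hG false hbcRc (by simp only [mem_insert, not_or]; exact ⟨hvc, hvR⟩) ?_
                  (n := n) (m := n+1) (by omega) (by omega)
                exact ⟨hvadjR.choose, mem_insert_of_mem hvadjR.choose_spec.1,
                  hvadjR.choose_spec.2⟩
            · -- v is a legal move also after inserting c: use the IH
              have hvLcR : v ∈ legalMoves G ∅ (insert c R) := by
                refine (mem_legal G).2 ⟨hvdomc, Or.inr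
                  ⟨hvadjR.choose, mem_insert_of_mem hvadjR.choose_spec.1,
                    hvadjR.choose_spec.2⟩⟩
              have step := ih true (insert v R) c (hbc.insert (Or.inr hvadjR))
                (by simp only [mem_insert, not_or]; exact ⟨fun h => hvc h.symm, hcR⟩)
                ⟨hadj.choose, mem_insert_of_mem hadj.choose_spec.1, hadj.choose_spec.2⟩
                (by rw [Finset.card_insert_of_notMem hvR]; omega)
              refine le_trans step ?_
              refine add_le_add_right ?_ 1
              rw [val_false_succ G ∅ hLRc]
              refine add_le_add_right ?_ 1
              rw [Finset.insert_comm]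
              exact Finset.le_sup' (fun w => val G ∅ true n (insert w (insert c R))) hvLcR
      · -- no legal move after inserting c: everything is dominated there
        have hdomc : (univ : Finset V) ⊆ ∅ ∪ nbhd G (insert c R) := by
          by_contra h
          exact hLRc (exists_legal G hG h)
        have hcLR : c ∈ legalMoves G ∅ R := by
          refine (mem_legal G).2 ⟨?_, Or.inr hadj⟩
          intro hsub
          refine hRundom fun u hu => ?_
          have := hdomc hu
          rw [mem_union, nbhd_insert, mem_union] at this
          rw [mem_union]
          rcases this with h | h | h
          · exact Or.inl h
          · exact Or.inr (hsub h)
          · exact Or.inr h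
        have hvalc : ∀ t' m, val G ∅ t' m (insert c R) = 0 := val_dom G hdomc
        cases t with
        | true =>
          rw [val_true_succ G ∅ hLR]
          refine le_trans (add_le_add_right (Finset.inf'_le _ hcLR) 1) ?_
          rw [hvalc false (n+1), add_zero]
          exact le_add_right (le_refl 1)
        | false =>
          rw [val_false_succ G ∅ hLR]
          refine add_le_add_right (Finset.sup'_le _ _ fun v hv => ?_) 1
          -- each branch is at most 1
          have hvR : v ∉ R := legal_not_mem G hv
          have hvadjR : ∃ u ∈ R, G.Adj v u := by
            rcases ((mem_legal G).1 hv).2 with h0 | h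
            · exfalso; rw [h0] at hadj; exact absurd hadj.choose_spec.1 (notMem_empty _)
            · exact h
          have hb : val G ∅ true (n+1) (insert v R) ≤ 1 := by
            by_cases hcv : nbhd G {c} ⊆ nbhd G (insert v R)
            · have hdomv : (univ : Finset V) ⊆ ∅ ∪ nbhd G (insert v R) := by
                intro u hu
                have := hdomc hu
                rw [mem_union, nbhd_insert, mem_union] at this
                rw [mem_union]
                rcases this with h | h | h
                · exact Or.inl h
                · exact Or.inr (hcv h)
                · exact Or.inr (nbhd_mono G (subset_insert _ _) h)
              rw [val_dom G hdomv]
              exact zero_le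
            · have hcLvR : c ∈ legalMoves G ∅ (insert v R) := by
                refine (mem_legal G).2 ⟨hcv, Or.inr
                  ⟨hadj.choose, mem_insert_of_mem hadj.choose_spec.1, hadj.choose_spec.2⟩⟩
              have hne : (legalMoves G ∅ (insert v R)).Nonempty := ⟨c, hcLvR⟩
              rw [val_true_succ G ∅ hne]
              refine le_trans (add_le_add_right (Finset.inf'_le _ hcLvR) 1) ?_
              have : (univ : Finset V) ⊆ ∅ ∪ nbhd G (insert c (insert v R)) := by
                intro u hu
                have := hdomc hu
                rw [mem_union, nbhd_insert, mem_union] at this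
                rw [mem_union, nbhd_insert, mem_union]
                rcases this with h | h | h
                · exact Or.inl h
                · exact Or.inr (Or.inl h)
                · exact Or.inr (Or.inr (nbhd_mono G (subset_insert _ _) h))
              rw [val_dom G this]
              exact le_of_eq (add_zero 1)
          exact le_trans hb (le_add_right (le_refl 1))
    · have hdom : (univ : Finset V) ⊆ ∅ ∪ nbhd G R := by
        by_contra h
        exact hLR (exists_legal G hG h)
      rw [val_succ_em G ∅ hLR, if_pos hdom]
      exact zero_le
lemma chBase_true {D : Finset V} (h : (legalMoves G S D).Nonempty) (fav : Bool) (n k : ℕ) :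
    chBase G S fav true n k D
      = 1 + (legalMoves G S D).inf' h fun v => valCh G S fav false n k (insert v D) := by
  simp [chBase, h]

lemma chBase_false {D : Finset V} (h : (legalMoves G S D).Nonempty) (fav : Bool) (n k : ℕ) :
    chBase G S fav false n k D
      = 1 + (legalMoves G S D).sup' h fun v => valCh G S fav true n k (insert v D) := by
  simp [chBase, h]

lemma chBase_em {D : Finset V} (h : ¬ (legalMoves G S D).Nonempty) (fav t : Bool) (n k : ℕ) :
    chBase G S fav t n k D = if univ ⊆ S ∪ nbhd G D then 0 else ⊤ := by
  simp [chBase, h]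

/-- Upper bound: against an optimal Dominator, even a Chooser colluding with Staller
adds at most his own moves to the game length. -/
lemma ub (hG : G.Connected) :
    ∀ (n : ℕ) (t : Bool) (k : ℕ) (R : Finset V), BuiltConn G R →
      Fintype.card V ≤ n + R.card →
      valCh G ∅ true t n k R ≤ val G ∅ t n R + k := by
  intro n
  induction n with
  | zero =>
    intro t k R _ _
    rw [valCh_zero, val_zero]
    exact le_self_add
  | succ n ih =>
    intro t k R hbc hfuel
    have hadjof : ∀ {v}, v ∈ legalMoves G ∅ R → BuiltConn G (insert v R) :=
      fun hv => hbc.insert ((mem_legal G).1 hv).2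
    have hfuel' : ∀ {v : V}, v ∉ R → Fintype.card V ≤ n + (insert v R).card := by
      intro v hv
      rw [Finset.card_insert_of_notMem hv]
      omega
    have hbase : chBase G ∅ true t n k R ≤ val G ∅ t (n + 1) R + k := by
      by_cases hL : (legalMoves G ∅ R).Nonempty
      · cases t with
        | true =>
          rw [chBase_true G ∅ hL, val_true_succ G ∅ hL]
          obtain ⟨v, hv, hEq⟩ :=
            Finset.exists_mem_eq_inf' hL (fun v => val G ∅ false n (insert v R))
          rw [hEq, add_assoc]
          refine add_le_add_right ?_ 1
          exact le_trans (Finset.inf'_le _ hv)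
            (ih false k (insert v R) (hadjof hv) (hfuel' (legal_not_mem G hv)))
        | false =>
          rw [chBase_false G ∅ hL, val_false_succ G ∅ hL, add_assoc]
          refine add_le_add_right (Finset.sup'_le _ _ fun v hv => ?_) 1
          refine le_trans (ih true k (insert v R) (hadjof hv) (hfuel' (legal_not_mem G hv))) ?_
          exact add_le_add_left
            (Finset.le_sup' (fun v => val G ∅ true n (insert v R)) hv) _
      · rw [chBase_em G ∅ hL, val_succ_em G ∅ hL]
        exact le_self_add
    cases k with
    | zero => rw [valCh_succ_zero]; exact hbase
    | succ k' =>
      rw [valCh_succ_succ]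
      by_cases hc : ((univ \ R).filter fun c => ∃ u ∈ R, G.Adj c u).Nonempty
      · rw [dif_pos hc, if_pos rfl]
        refine max_le hbase ?_
        have hstep : ∀ c ∈ (univ \ R).filter fun c => ∃ u ∈ R, G.Adj c u,
            valCh G ∅ true t n k' (insert c R) ≤ val G ∅ t (n + 1) R + k' := by
          intro c hcm
          rw [mem_filter, mem_sdiff] at hcm
          obtain ⟨⟨-, hcR⟩, hc2⟩ := hcm
          refine le_trans (ih t k' (insert c R) (hbc.insert (Or.inr hc2)) (hfuel' hcR)) ?_
          exact add_le_add_left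
            (contB G hG t hbc hcR hc2 (n := n) (m := n + 1) (by omega) (by omega)) _
        refine le_trans (add_le_add_right (Finset.sup'_le _ _ hstep) 1) ?_
        refine le_of_eq ?_
        push_cast
        ring
      · rw [dif_neg hc]
        exact hbase

/-- Lower bound: against an optimal Staller, even a Chooser colluding with Dominator
saves at most his own number of moves. -/
lemma lb (hG : G.Connected) :
    ∀ (n : ℕ) (t : Bool) (k : ℕ) (R : Finset V), BuiltConn G R →
      Fintype.card V ≤ n + R.card →
      val G ∅ t n R ≤ valCh G ∅ false t n k R + k := by
  intro n
  induction n with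
  | zero =>
    intro t k R _ _
    rw [valCh_zero, val_zero]
    exact le_self_add
  | succ n ih =>
    intro t k R hbc hfuel
    have hadjof : ∀ {v}, v ∈ legalMoves G ∅ R → BuiltConn G (insert v R) :=
      fun hv => hbc.insert ((mem_legal G).1 hv).2
    have hfuel' : ∀ {v : V}, v ∉ R → Fintype.card V ≤ n + (insert v R).card := by
      intro v hv
      rw [Finset.card_insert_of_notMem hv]
      omega
    have hbase : val G ∅ t (n + 1) R ≤ chBase G ∅ false t n k R + k := by
      by_cases hL : (legalMoves G ∅ R).Nonempty
      · cases t with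
        | true =>
          rw [chBase_true G ∅ hL, val_true_succ G ∅ hL]
          obtain ⟨v, hv, hEq⟩ := Finset.exists_mem_eq_inf' hL
            (fun v => valCh G ∅ false false n k (insert v R))
          rw [hEq, add_assoc]
          refine add_le_add_right ?_ 1
          exact le_trans (Finset.inf'_le _ hv)
            (ih false k (insert v R) (hadjof hv) (hfuel' (legal_not_mem G hv)))
        | false =>
          rw [chBase_false G ∅ hL, val_false_succ G ∅ hL, add_assoc]
          refine add_le_add_right (Finset.sup'_le _ _ fun v hv => ?_) 1
          refine le_trans (ih true k (insert v R) (hadjof hv) (hfuel' (legal_not_mem G hv))) ?_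
          exact add_le_add_left
            (Finset.le_sup' (fun v => valCh G ∅ false true n k (insert v R)) hv) _
      · rw [chBase_em G ∅ hL, val_succ_em G ∅ hL]
        exact le_self_add
    cases k with
    | zero => rw [valCh_succ_zero]; exact hbase
    | succ k' =>
      rw [valCh_succ_succ]
      by_cases hc : ((univ \ R).filter fun c => ∃ u ∈ R, G.Adj c u).Nonempty
      · rw [dif_pos hc, if_neg (show ¬ (false = true) by decide)]
        have h2 : val G ∅ t (n + 1) R ≤
            (1 + ((univ \ R).filter fun c => ∃ u ∈ R, G.Adj c u).inf' hc
              fun c => valCh G ∅ false t n k' (insert c R)) + (k' + 1 : ℕ) := by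
          obtain ⟨c, hcm, hEq⟩ := Finset.exists_mem_eq_inf' hc
            (fun c => valCh G ∅ false t n k' (insert c R))
          rw [hEq]
          rw [mem_filter, mem_sdiff] at hcm
          obtain ⟨⟨-, hcR⟩, hc2⟩ := hcm
          refine le_trans (insTwo G hG n t R c hbc hcR hc2 (by omega)) ?_
          refine le_trans (add_le_add_right (add_le_add_right
            (ih t k' (insert c R) (hbc.insert (Or.inr hc2)) (hfuel' hcR)) 1) 1) ?_
          refine le_of_eq ?_
          push_cast
          ring
        rcases min_cases (chBase G ∅ false t n (k' + 1) R)
          (1 + ((univ \ R).filter fun c => ∃ u ∈ R, G.Adj c u).inf' hc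
            fun c => valCh G ∅ false t n k' (insert c R)) with ⟨hEq, -⟩ | ⟨hEq, -⟩ <;>
          rw [hEq]
        · exact hbase
        · exact h2
      · rw [dif_neg hc]
        exact hbase

end Aux

/-- Chooser Lemma: in the Dominator-start connected domination game with Chooser on a
connected graph `G`, if Chooser plays at most `k` vertices and Dominator and Staller
play optimally, then the total number of played vertices is at most `γ_cg(G) + k`
(even if Chooser colludes with Staller) and at least `γ_cg(G) − k` (even if Chooser
colludes with Dominator). -/
theorem chooser_lemma {V : Type*} [Fintype V] [DecidableEq V] (G : SimpleGraph V)
    [DecidableRel G.Adj] (hG : G.Connected) (k : ℕ) :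
    valCh G ∅ true true (Fintype.card V) k ∅ ≤ gammaCG G ∅ + k ∧
      gammaCG G ∅ - k ≤ valCh G ∅ false true (Fintype.card V) k ∅ := by
  constructor
  · exact ub G hG (Fintype.card V) true k ∅ BuiltConn.empty (by simp)
  · exact tsub_le_iff_right.2 (lb G hG (Fintype.card V) true k ∅ BuiltConn.empty (by simp))

end ConnDomGame
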